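/- Let (X, T, μ) be an ergodic measure-preserving dynamical system with μ a finite nonatomic measure, and let f : X → [0,∞) be measurable with μ(S_r) > 0 for r > 0, where S_r = {x : f(x) ≤ r}. For l > 0 and r > 0 set C_{l,r} = {x ∈ S_r : τ(x, S_r) > l·μ(S_r)^{−1}}. If there exists l > 0 such that limsup_{r→0} μ(C_{l,r})/μ(S_r) > 0, then for μ-almost every x, liminf_{r→0} log τ(x, S_r)/(−log r) ≤ limsup_{r→0} log μ(S_r)/log r. -/

import Mathlib

/-!
If `μ {f ≤ 0} ≠ 0`, almost every orbit enters `{f ≤ 0} ⊆ S_r` at some time `n`, so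
`τ(x, S_r) ≤ n` for every `r > 0`. Otherwise `μ(S_r) → 0`; along `r_n → 0` with
`μ(C_{l,r_n}) ≥ c μ(S_{r_n})` put `K_n = ⌊l / μ(S_{r_n})⌋`. The sets `T⁻ʲ C` (`j < K_n`), where `C`
is the set of points of `S_{r_n}` not returning within `K_n` steps, are pairwise disjoint, so their
union `D_n` has measure at least `c l / 2`. Hence `limsup D_n` has positive measure, and by
ergodicity almost every `x` satisfies `T^k x ∈ D_n` for one `k` and infinitely many `n`, which gives
`τ(x, S_{r_n}) ≤ (k + 1) l / μ(S_{r_n})`. In both cases `τ(x, S_r) ≤ M / μ(S_r)` for arbitrarily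
small `r`, and then `log τ(x, S_r) / (-log r) ≤ log M / (-log r) + log μ(S_r) / log r`.
-/

open Filter MeasureTheory Set Topology ENNReal

/-- Hitting time of the set `S` for the orbit of `x` under `T`:
`τ(x,S) = min {n ∈ ℕ⁺ : Tⁿ x ∈ S}`, equal to `⊤` if the orbit never enters `S`. -/
noncomputable def hitTime {X : Type*} (T : X → X) (S : Set X) (x : X) : ℕ∞ :=
  sInf ((fun n : ℕ => (n : ℕ∞)) '' {n : ℕ | 0 < n ∧ T^[n] x ∈ S})

section HitTime

variable {X : Type*} {T : X → X} {S : Set X} {x : X}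

lemma hitTime_le_of_iterate_mem {n : ℕ} (hn : 0 < n) (h : T^[n] x ∈ S) :
    hitTime T S x ≤ n :=
  sInf_le ⟨n, ⟨hn, h⟩, rfl⟩

lemma hitTime_le_iff {n : ℕ} : hitTime T S x ≤ n ↔ ∃ m, 0 < m ∧ m ≤ n ∧ T^[m] x ∈ S := by
  refine ⟨fun h => ?_, fun ⟨m, hm, hmn, hmS⟩ =>
    (hitTime_le_of_iterate_mem hm hmS).trans (by exact_mod_cast hmn)⟩
  by_contra! hS
  have : ((n + 1 : ℕ) : ℕ∞) ≤ hitTime T S x :=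
    le_sInf <| by
      rintro _ ⟨m, ⟨hm, hmS⟩, rfl⟩
      exact Nat.cast_le.mpr (Nat.lt_of_not_le fun hmn => hS m hm hmn hmS)
  exact absurd (this.trans h) (by norm_cast; omega)

lemma pairwiseDisjoint_preimage_iterate_hitTime_gt (K : ℕ) :
    (Finset.range K : Set ℕ).PairwiseDisjoint
      fun j => T^[j] ⁻¹' {x ∈ S | (K : ℕ∞) < hitTime T S x} := by
  have hdisj : ∀ i j, i < j → j < K →
      Disjoint (T^[i] ⁻¹' {x ∈ S | (K : ℕ∞) < hitTime T S x})
        (T^[j] ⁻¹' {x ∈ S | (K : ℕ∞) < hitTime T S x}) := by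
    refine fun i j hij hjK => Set.disjoint_left.mpr fun z hzi hzj => ?_
    have hret : T^[j - i] (T^[i] z) ∈ S := by
      rw [← Function.iterate_add_apply, Nat.sub_add_cancel hij.le]
      exact hzj.1
    exact (hitTime_le_of_iterate_mem (by omega) hret).not_gt
      (lt_of_le_of_lt (by exact_mod_cast (by omega : j - i ≤ K)) hzi.2)
  intro i hi j hj hij
  rcases hij.lt_or_gt with h | h
  · exact hdisj i j h (by simpa using hj)
  · exact (hdisj j i h (by simpa using hi)).symm

variable [MeasurableSpace X] {μ : Measure X}

lemma measurableSet_hitTime_le (hT : Measurable T) (hS : MeasurableSet S) (n : ℕ) :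
    MeasurableSet {x | hitTime T S x ≤ n} := by
  simp_rw [hitTime_le_iff]
  measurability

lemma measurableSet_sep_lt_hitTime (hT : Measurable T) (hS : MeasurableSet S) (n : ℕ) :
    MeasurableSet {x ∈ S | (n : ℕ∞) < hitTime T S x} := by
  convert hS.inter (measurableSet_hitTime_le hT hS n).compl using 1
  ext
  simp

lemma MeasureTheory.MeasurePreserving.measure_biUnion_preimage_iterate_hitTime_gt
    (hT : MeasurePreserving T μ μ) (hS : MeasurableSet S) (K : ℕ) :
    μ (⋃ j ∈ Finset.range K, T^[j] ⁻¹' {x ∈ S | (K : ℕ∞) < hitTime T S x})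
      = K * μ {x ∈ S | (K : ℕ∞) < hitTime T S x} := by
  have hC := measurableSet_sep_lt_hitTime hT.measurable hS K
  rw [measure_biUnion_finset (pairwiseDisjoint_preimage_iterate_hitTime_gt K)
    fun j _ => hT.measurable.iterate j hC]
  simp_rw [(hT.iterate _).measure_preimage hC.nullMeasurableSet]
  simp

end HitTime

lemma ENNReal.exists_nat_le_div_and_half_le_mul {a b : ℝ≥0∞} (ha : a ≠ 0) (hab : a ≤ b / 2)
    (hb : b ≠ ⊤) : ∃ K : ℕ, (K : ℝ≥0∞) ≤ b / a ∧ b / 2 ≤ K * a := by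
  have ha' : a ≠ ⊤ := ne_top_of_le_ne_top (ENNReal.div_ne_top hb two_ne_zero) hab
  lift a to NNReal using ha'
  lift b to NNReal using hb
  rw [← ENNReal.coe_ofNat, ← ENNReal.coe_div two_ne_zero, ENNReal.coe_le_coe] at hab
  rw [ENNReal.coe_ne_zero] at ha
  rw [← ENNReal.coe_div ha]
  refine ⟨⌊b / a⌋₊, by exact_mod_cast Nat.floor_le (by positivity),
    ENNReal.div_le_of_le_mul ?_⟩
  have hfloor := Nat.lt_floor_add_one (b / a)
  rw [div_lt_iff₀ (by positivity)] at hfloor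
  rw [← NNReal.coe_le_coe, NNReal.coe_div] at hab
  rw [← NNReal.coe_lt_coe] at hfloor
  push_cast at hab hfloor
  exact_mod_cast (show (b : ℝ) ≤ ⌊b / a⌋₊ * a * 2 by linarith)

lemma ENNReal.ofReal_mul_le_of_lt_toReal_div {a b : ℝ≥0∞} {c : ℝ} (hc : 0 ≤ c) (hb : b ≠ ⊤)
    (h : c < a.toReal / b.toReal) : ENNReal.ofReal c * b ≤ a := by
  have hb0 : 0 < b.toReal := by
    by_contra! hb0
    simp [le_antisymm hb0 ENNReal.toReal_nonneg] at h
    linarith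
  rw [lt_div_iff₀ hb0] at h
  calc ENNReal.ofReal c * b = ENNReal.ofReal (c * b.toReal) := by
        rw [ENNReal.ofReal_mul hc, ENNReal.ofReal_toReal hb]
    _ ≤ ENNReal.ofReal a.toReal := ENNReal.ofReal_le_ofReal h.le
    _ ≤ a := ENNReal.ofReal_toReal_le

lemma MeasureTheory.MeasurePreserving.exists_nat_le_div_and_le_measure_biUnion {X : Type*}
    [MeasurableSpace X] {μ : Measure X} {T : X → X} {S : Set X} (hT : MeasurePreserving T μ μ)
    (hS : MeasurableSet S) (hS0 : μ S ≠ 0) {l c : ℝ≥0∞} (hSl : μ S ≤ l / 2) (hl : l ≠ ⊤)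
    (hc : c * μ S ≤ μ {x ∈ S | l / μ S < hitTime T S x}) :
    ∃ K : ℕ, (K : ℝ≥0∞) ≤ l / μ S ∧
      c * (l / 2) ≤ μ (⋃ j ∈ Finset.range K, T^[j] ⁻¹' {x ∈ S | (K : ℕ∞) < hitTime T S x}) := by
  obtain ⟨K, hKl, hlK⟩ := ENNReal.exists_nat_le_div_and_half_le_mul hS0 hSl hl
  refine ⟨K, hKl, ?_⟩
  have hsub : {x ∈ S | l / μ S < hitTime T S x} ⊆ {x ∈ S | (K : ℕ∞) < hitTime T S x} :=
    fun x hx => ⟨hx.1, ENat.toENNReal_lt.mp (hKl.trans_lt hx.2)⟩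
  rw [hT.measure_biUnion_preimage_iterate_hitTime_gt hS K]
  calc c * (l / 2) ≤ c * (K * μ S) := by gcongr
    _ = K * (c * μ S) := by ring
    _ ≤ K * μ {x ∈ S | (K : ℕ∞) < hitTime T S x} := by grw [hc, measure_mono hsub]

section FiniteMeasure

variable {X : Type*} [MeasurableSpace X] {μ : Measure X} [IsFiniteMeasure μ]

lemma le_measure_limsup_atTop_of_forall_le {s : ℕ → Set X} (hs : ∀ n, NullMeasurableSet (s n) μ)
    {a : ℝ≥0∞} (ha : ∀ n, a ≤ μ (s n)) : a ≤ μ (limsup s atTop) := by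
  rw [limsup_eq_iInf_iSup_of_nat]
  simp only [iInf_eq_iInter, iSup_eq_iUnion]
  have hanti : Antitone fun N => ⋃ i ≥ N, s i := fun _ _ hNM =>
    iUnion₂_mono' fun i hi => ⟨i, hNM.trans hi, le_rfl⟩
  rw [hanti.measure_iInter (fun N => .iUnion fun i => .iUnion fun _ => hs i)
    ⟨0, measure_ne_top _ _⟩]
  exact le_iInf fun N => (ha N).trans (measure_mono (subset_iUnion₂_of_subset N le_rfl le_rfl))

lemma tendsto_measure_setOf_le_nhdsGT {f : X → ℝ} (hf : Measurable f) (a : ℝ) :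
    Tendsto (fun r => μ {x | f x ≤ r}) (𝓝[>] a) (𝓝 (μ {x | f x ≤ a})) := by
  have hI : ⋂ r > a, {x | f x ≤ r} = {x | f x ≤ a} := by
    ext x
    simp [forall_gt_imp_ge_iff_le_of_dense]
  rw [← hI]
  exact tendsto_measure_biInter_gt (fun r _ => (hf measurableSet_Iic).nullMeasurableSet)
    (fun _ _ _ hij _ hx => hx.trans hij) ⟨a + 1, by linarith, measure_ne_top _ _⟩

variable {T : X → X}

lemma Ergodic.ae_exists_iterate_mem (hT : Ergodic T μ) {s : Set X} (hs : MeasurableSet s)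
    (hs0 : μ s ≠ 0) : ∀ᵐ x ∂μ, ∃ n, 0 < n ∧ T^[n] x ∈ s := by
  set H := ⋃ n, T^[n + 1] ⁻¹' s
  have hH : MeasurableSet H := .iUnion fun n => hT.measurable.iterate (n + 1) hs
  have hTH : T ⁻¹' H ⊆ H := by
    intro x hx
    obtain ⟨n, hn⟩ := mem_iUnion.mp hx
    exact mem_iUnion.mpr ⟨n + 1, by rwa [mem_preimage, Function.iterate_succ_apply]⟩
  have hsH : T ⁻¹' s ⊆ H := subset_iUnion_of_subset 0 fun x hx => hx
  rcases hT.ae_empty_or_univ_of_preimage_ae_le hH.nullMeasurableSet hTH.eventuallyLE with h | h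
  · refine absurd ?_ hs0
    rw [← hT.measure_preimage hs.nullMeasurableSet]
    exact measure_mono_null hsH (ae_eq_empty.mp h)
  · filter_upwards [ae_eq_univ.mp h] with x hx
    obtain ⟨n, hn⟩ := mem_iUnion.mp hx
    exact ⟨n + 1, n.succ_pos, hn⟩

variable {ι : Type*} {L : Filter ι} {S : ι → Set X}

lemma Ergodic.ae_eventually_hitTime_le_div_of_subset (hT : Ergodic T μ) {Z : Set X}
    (hZ : MeasurableSet Z) (hZ0 : μ Z ≠ 0) (hZS : ∀ᶠ i in L, Z ⊆ S i) :
    ∀ᵐ x ∂μ, ∃ M : ℝ≥0∞, M ≠ 0 ∧ M ≠ ⊤ ∧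
      ∀ᶠ i in L, (hitTime T (S i) x : ℝ≥0∞) ≤ M / μ (S i) := by
  filter_upwards [hT.ae_exists_iterate_mem hZ hZ0] with x ⟨n, hn, hnZ⟩
  have huniv : μ univ ≠ 0 := fun h => hZ0 (measure_mono_null (subset_univ Z) h)
  refine ⟨n * μ univ, mul_ne_zero (by exact_mod_cast hn.ne') huniv,
    ENNReal.mul_ne_top (ENNReal.natCast_ne_top n) (measure_ne_top μ univ), ?_⟩
  filter_upwards [hZS] with i hi
  have hSi : μ (S i) ≠ 0 := fun h => hZ0 (measure_mono_null hi h)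
  rw [ENNReal.le_div_iff_mul_le (.inl hSi) (.inl (measure_ne_top μ _))]
  gcongr
  · exact_mod_cast hitTime_le_of_iterate_mem hn (hi hnZ)
  · exact subset_univ _

lemma Ergodic.ae_frequently_hitTime_le_div_of_frequently_le_measure
    [L.IsCountablyGenerated] (hT : Ergodic T μ) (hS : ∀ i, MeasurableSet (S i))
    (hS0 : Tendsto (fun i => μ (S i)) L (𝓝 0)) (hSpos : ∀ᶠ i in L, μ (S i) ≠ 0)
    {l c : ℝ≥0∞} (hl0 : l ≠ 0) (hl : l ≠ ⊤) (hc : c ≠ 0)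
    (hfreq : ∃ᶠ i in L, c * μ (S i) ≤ μ {x ∈ S i | l / μ (S i) < hitTime T (S i) x}) :
    ∀ᵐ x ∂μ, ∃ M : ℝ≥0∞, M ≠ 0 ∧ M ≠ ⊤ ∧
      ∃ᶠ i in L, (hitTime T (S i) x : ℝ≥0∞) ≤ M / μ (S i) := by
  obtain ⟨u, hu, hPu⟩ := exists_seq_forall_of_frequently <| hfreq.and_eventually <|
    hSpos.and (hS0 (Iic_mem_nhds (ENNReal.half_pos hl0)))
  choose K hKl hKD using fun n => hT.toMeasurePreserving.exists_nat_le_div_and_le_measure_biUnion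
    (hS (u n)) (hPu n).2.1 (hPu n).2.2 hl (hPu n).1
  set D : ℕ → Set X := fun n =>
    ⋃ j ∈ Finset.range (K n), T^[j] ⁻¹' {x ∈ S (u n) | (K n : ℕ∞) < hitTime T (S (u n)) x}
  have hD : ∀ n, MeasurableSet (D n) := fun n => .biUnion (Finset.range _).countable_toSet
    fun j _ => hT.measurable.iterate j (measurableSet_sep_lt_hitTime hT.measurable (hS _) _)
  have hG0 : μ (limsup D atTop) ≠ 0 := by
    refine (lt_of_lt_of_le ?_
      (le_measure_limsup_atTop_of_forall_le (fun n => (hD n).nullMeasurableSet) hKD)).ne'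
    exact ENNReal.mul_pos hc (ENNReal.half_pos hl0).ne'
  filter_upwards [hT.ae_exists_iterate_mem (MeasurableSet.measurableSet_limsup hD) hG0]
    with x ⟨k, hk, hkG⟩
  refine ⟨(k + 1) * l, mul_ne_zero (by positivity) hl0,
    ENNReal.mul_ne_top (by exact_mod_cast ENNReal.natCast_ne_top (k + 1)) hl, ?_⟩
  refine hu.frequently ((mem_limsup_iff_frequently_mem.mp hkG).mono fun n hn => ?_)
  obtain ⟨j, hj, hjS, -⟩ := mem_iUnion₂.mp hn
  rw [Finset.mem_range] at hj
  have hret : hitTime T (S (u n)) x ≤ (j + k : ℕ) :=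
    hitTime_le_of_iterate_mem (by omega) (by rwa [Function.iterate_add_apply])
  calc (hitTime T (S (u n)) x : ℝ≥0∞) ≤ ((j + k : ℕ) : ℝ≥0∞) := by exact_mod_cast hret
    _ ≤ ((k + 1) * K n : ℕ) := by gcongr; nlinarith
    _ ≤ (k + 1) * (l / μ (S (u n))) := by push_cast; gcongr; exact hKl n
    _ = (k + 1) * l / μ (S (u n)) := (mul_div_assoc _ _ _).symm

end FiniteMeasure

lemma log_div_neg_log_le_of_le_div {t m M : ℝ≥0∞} {r : ℝ} (hr0 : 0 < r) (hr1 : r < 1)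
    (hM0 : M ≠ 0) (hM : M ≠ ⊤) (hm0 : m ≠ 0) (hm : m ≠ ⊤) (ht : t ≤ M / m) :
    ENNReal.log t / ((-Real.log r : ℝ) : EReal)
      ≤ ((Real.log M.toReal / -Real.log r : ℝ) : EReal)
        + ENNReal.log m / ((Real.log r : ℝ) : EReal) := by
  have hlog : 0 < -Real.log r := by linarith [Real.log_neg hr0 hr1]
  calc ENNReal.log t / ((-Real.log r : ℝ) : EReal)
      ≤ ENNReal.log (M / m) / ((-Real.log r : ℝ) : EReal) :=
        EReal.div_le_div_right_of_nonneg (by exact_mod_cast hlog.le) (ENNReal.log_le_log ht)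
    _ = _ := by
      rw [ENNReal.log_pos_real (by simp [hM0, hm]) (ENNReal.div_ne_top hM hm0),
        ENNReal.log_pos_real hm0 hm, ← EReal.coe_div, ← EReal.coe_div, ← EReal.coe_add,
        ENNReal.toReal_div, Real.log_div (ENNReal.toReal_ne_zero.mpr ⟨hM0, hM⟩)
          (ENNReal.toReal_ne_zero.mpr ⟨hm0, hm⟩)]
      congr 1
      field_simp
      ring

lemma liminf_log_div_neg_log_le_limsup_of_frequently_le_div {τ m : ℝ → ℝ≥0∞} {M : ℝ≥0∞}
    (hM0 : M ≠ 0) (hM : M ≠ ⊤) (hm0 : ∀ r, 0 < r → m r ≠ 0) (hm : ∀ r, m r ≠ ⊤)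
    (hτ : ∃ᶠ r in 𝓝[>] 0, τ r ≤ M / m r) :
    liminf (fun r => ENNReal.log (τ r) / ((-Real.log r : ℝ) : EReal)) (𝓝[>] 0)
      ≤ limsup (fun r => ENNReal.log (m r) / ((Real.log r : ℝ) : EReal)) (𝓝[>] 0) := by
  set e : ℝ → EReal := fun r => ((Real.log M.toReal / -Real.log r : ℝ) : EReal)
  have he : Tendsto e (𝓝[>] 0) (𝓝 0) :=
    (continuous_coe_real_ereal.tendsto 0).comp
      ((tendsto_neg_atBot_atTop.comp Real.tendsto_log_nhdsGT_zero).const_div_atTop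
        (Real.log M.toReal))
  have hr : ∀ᶠ r in 𝓝[>] (0 : ℝ), r ∈ Ioo 0 1 := Ioo_mem_nhdsGT one_pos
  calc _ ≤ limsup (e + fun r => ENNReal.log (m r) / ((Real.log r : ℝ) : EReal)) (𝓝[>] 0) :=
        liminf_le_limsup_of_frequently_le <| (hτ.and_eventually hr).mono fun r ⟨hτr, hr⟩ =>
          log_div_neg_log_le_of_le_div hr.1 hr.2 hM0 hM (hm0 r hr.1) (hm r) hτr
    _ ≤ limsup e (𝓝[>] 0) + limsup _ (𝓝[>] 0) :=
        EReal.limsup_add_le (by simp [he.limsup_eq]) (by simp [he.limsup_eq])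
    _ = _ := by rw [he.limsup_eq, zero_add]

lemma Ergodic.ae_frequently_hitTime_setOf_le_le_div {X : Type*} [MeasurableSpace X]
    {μ : Measure X} [IsFiniteMeasure μ] {T : X → X} (hT : Ergodic T μ) {f : X → ℝ}
    (hf : Measurable f) (hpos : ∀ r : ℝ, 0 < r → 0 < μ {x | f x ≤ r}) {l c : ℝ} (hl : 0 < l)
    (hc : 0 < c)
    (hfreq : ∃ᶠ r in 𝓝[>] 0, c < (μ {x ∈ {y | f y ≤ r} |
      ENNReal.ofReal l / μ {y | f y ≤ r} < (hitTime T {y | f y ≤ r} x : ℝ≥0∞)}).toReal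
        / (μ {y | f y ≤ r}).toReal) :
    ∀ᵐ x ∂μ, ∃ M : ℝ≥0∞, M ≠ 0 ∧ M ≠ ⊤ ∧
      ∃ᶠ r in 𝓝[>] 0, (hitTime T {y | f y ≤ r} x : ℝ≥0∞) ≤ M / μ {y | f y ≤ r} := by
  have hS (r : ℝ) : MeasurableSet {y | f y ≤ r} := hf measurableSet_Iic
  by_cases hZ : μ {y | f y ≤ 0} = 0
  · exact hT.ae_frequently_hitTime_le_div_of_frequently_le_measure hS
      (hZ ▸ tendsto_measure_setOf_le_nhdsGT hf 0)
      (eventually_mem_nhdsWithin.mono fun r hr => (hpos r hr).ne')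
      (ENNReal.ofReal_pos.mpr hl).ne' ENNReal.ofReal_ne_top (ENNReal.ofReal_pos.mpr hc).ne'
      (hfreq.mono fun r hr => ENNReal.ofReal_mul_le_of_lt_toReal_div hc.le (measure_ne_top μ _) hr)
  · have hsub : ∀ᶠ r in 𝓝[>] (0 : ℝ), {y | f y ≤ 0} ⊆ {y | f y ≤ r} :=
      eventually_mem_nhdsWithin.mono fun r hr y (hy : f y ≤ 0) => hy.trans (le_of_lt hr)
    filter_upwards [hT.ae_eventually_hitTime_le_div_of_subset (hS 0) hZ hsub]
      with x ⟨M, hM0, hM, hev⟩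
    exact ⟨M, hM0, hM, hev.frequently⟩

theorem nontrivial_return_statistics_implies_liminf_le_general
    {X : Type*} [MeasurableSpace X] (μ : Measure X) [IsFiniteMeasure μ]
    (T : X → X) (hT : Ergodic T μ)
    (f : X → ℝ) (hf : Measurable f)
    (hpos : ∀ r : ℝ, 0 < r → 0 < μ {x | f x ≤ r})
    (hl : ∃ l : ℝ, 0 < l ∧
      0 < limsup (fun r : ℝ =>
        (μ {x | x ∈ {y | f y ≤ r} ∧
            ENNReal.ofReal l / μ {y | f y ≤ r} < (hitTime T {y | f y ≤ r} x : ℝ≥0∞)}).toReal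
          / (μ {y | f y ≤ r}).toReal) (𝓝[>] 0)) :
    ∀ᵐ x ∂μ,
      liminf (fun r : ℝ =>
          ENNReal.log ((hitTime T {y | f y ≤ r} x : ℝ≥0∞)) / ((- Real.log r : ℝ) : EReal))
        (𝓝[>] 0)
      ≤ limsup (fun r : ℝ =>
          ENNReal.log (μ {y | f y ≤ r}) / ((Real.log r : ℝ) : EReal)) (𝓝[>] 0) := by
  obtain ⟨l, hl0, hlim⟩ := hl
  have hfreq := frequently_lt_of_lt_limsup (isCoboundedUnder_le_of_le _ fun r =>
    div_nonneg ENNReal.toReal_nonneg ENNReal.toReal_nonneg) (half_lt_self hlim)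
  filter_upwards [hT.ae_frequently_hitTime_setOf_le_le_div hf hpos hl0 (half_pos hlim) hfreq]
    with x ⟨M, hM0, hM, hτ⟩
  exact liminf_log_div_neg_log_le_limsup_of_frequently_le_div hM0 hM
    (fun r hr => (hpos r hr).ne') (fun r => measure_ne_top μ _) hτ

/-- Let `(X,T,μ)` be ergodic with `μ` finite and nonatomic, `S_r = {x : f x ≤ r}` with
`μ(S_r) > 0`, and `C_{l,r} = {x ∈ S_r : τ(x,S_r) > l·μ(S_r)⁻¹}`. If there is `l > 0` with
`limsup_{r→0} μ(C_{l,r})/μ(S_r) > 0`, then for `μ`-a.e. `x`,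
`liminf_{r→0} log τ(x,S_r)/(-log r) ≤ limsup_{r→0} log μ(S_r)/log r`. -/
theorem nontrivial_return_statistics_implies_liminf_le
    {X : Type*} [MeasurableSpace X] (μ : Measure X) [IsFiniteMeasure μ] [NullSingletonClass μ]
    (T : X → X) (hT : Ergodic T μ)
    (f : X → ℝ) (hf : Measurable f) (hf0 : ∀ x, 0 ≤ f x)
    (hpos : ∀ r : ℝ, 0 < r → 0 < μ {x | f x ≤ r})
    (hl : ∃ l : ℝ, 0 < l ∧
      0 < limsup (fun r : ℝ =>
        (μ {x | x ∈ {y | f y ≤ r} ∧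
            ENNReal.ofReal l / μ {y | f y ≤ r} < (hitTime T {y | f y ≤ r} x : ℝ≥0∞)}).toReal
          / (μ {y | f y ≤ r}).toReal) (𝓝[>] 0)) :
    ∀ᵐ x ∂μ,
      liminf (fun r : ℝ =>
          ENNReal.log ((hitTime T {y | f y ≤ r} x : ℝ≥0∞)) / ((- Real.log r : ℝ) : EReal))
        (𝓝[>] 0)
      ≤ limsup (fun r : ℝ =>
          ENNReal.log (μ {y | f y ≤ r}) / ((Real.log r : ℝ) : EReal)) (𝓝[>] 0) :=
  nontrivial_return_statistics_implies_liminf_le_general μ T hT f hf hpos hl
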